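/- arXiv:2007.05247 — 2 statements merged into one kernel-verified Lean document; each statement's English description precedes it below -/
import Mathlib

section
/- Let M be an Orlicz function and φ(α) = log ∫_ℝ exp(α·M(x)) dx for α < 0. Then lim_{α ↑ 0} φ'(α) = +∞ and lim_{α → -∞} φ'(α) = 0. Consequently, for every R ∈ (0, ∞) there exists a unique α* < 0 with φ'(α*) = R. -/
open MeasureTheory Filter

def IsOrlicz (M : ℝ → ℝ) : Prop :=
  ConvexOn ℝ Set.univ M ∧ (∀ t, M (-t) = M t) ∧ M 0 = 0 ∧ ∀ t ≠ 0, 0 < M t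

/-!
`φ = cgf M volume` is the cumulant generating function of `M` under Lebesgue measure, so
`φ' α = W α / Z α` with `Z = mgf M volume` and `W α = ∫ M e^{αM}`: the mean of `M` under the
tilted density `e^{αM} / Z α`. Its derivative is the tilted variance of `M`, positive because
the continuous non-constant `M` is not a.e. constant. So `φ'` is continuous and strictly
increasing on `(-∞, 0)`, and `φ' α = R` has a unique solution by the intermediate value theorem
once the two limits are known.

As `α ↑ 0`, `Z α → ∞` (as `Z α ≥ 2T e^{αM(T)}` for every `T`), while by the linear
growth of `M` the set `{M < B}` is bounded and contributes `O(1)` to `Z`; so `W ≥ B (Z - O(1))`.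
As `α → -∞`, on `{M > ε}` the weight `M e^{αM}` is at most `e^{(α+1)ε} M e^{-M}`, whereas
`Z α ≥ 2δ e^{αM(δ)}` with `M δ < ε`; so `φ' α ≤ ε + O(e^{α(ε - M δ)})`.
-/

open Real Set Topology ProbabilityTheory

lemma integrable_exp_neg_mul_abs {c : ℝ} (hc : 0 < c) :
    Integrable fun x : ℝ => exp (-(c * |x|)) := by
  rw [← integrableOn_univ, ← Iic_union_Ioi (a := 0)]
  refine IntegrableOn.union ?_ ?_
  · refine (integrableOn_exp_mul_Iic hc 0).congr_fun (fun x hx => ?_) measurableSet_Iic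
    simp [abs_of_nonpos (mem_Iic.1 hx)]
  · refine (integrableOn_exp_mul_Ioi (neg_neg_of_pos hc) 0).congr_fun (fun x hx => ?_)
      measurableSet_Ioi
    simp [abs_of_pos (mem_Ioi.1 hx)]

lemma StrictMonoOn.existsUnique_eq_of_tendsto {f : ℝ → ℝ} {a L R : ℝ}
    (hf : StrictMonoOn f (Iio a)) (hcont : ContinuousOn f (Iio a))
    (hbot : Tendsto f atBot (𝓝 L)) (htop : Tendsto f (𝓝[<] a) atTop) (hR : L < R) :
    ∃! x, x < a ∧ f x = R := by
  obtain ⟨y, hyR, hya⟩ : ∃ y, R < f y ∧ y < a :=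
    ((htop.eventually_gt_atTop R).and self_mem_nhdsWithin).exists
  obtain ⟨x, hxR, hxy⟩ : ∃ x, f x < R ∧ x < y :=
    ((hbot.eventually (gt_mem_nhds hR)).and (eventually_lt_atBot y)).exists
  obtain ⟨z, hz, hfz⟩ :=
    intermediate_value_Ioo hxy.le (hcont.mono fun t ht => ht.2.trans_lt hya) ⟨hxR, hyR⟩
  exact ⟨z, ⟨hz.2.trans hya, hfz⟩,
    fun w hw => hf.injOn hw.1 (hz.2.trans hya) (hw.2.trans hfz.symm)⟩

namespace ProbabilityTheory

variable {Ω : Type*} [MeasurableSpace Ω] {X : Ω → ℝ} {μ : Measure Ω} {v c : ℝ}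

lemma integral_sq_sub_mul_exp_pos (hv : v ∈ interior (integrableExpSet X μ))
    (hX : ¬ ∀ᵐ ω ∂μ, X ω = c) :
    0 < ∫ ω, (X ω - c) ^ 2 * exp (v * X ω) ∂μ := by
  have hpow := integrable_pow_mul_exp_of_mem_interior_integrableExpSet hv
  have hint : Integrable (fun ω => (X ω - c) ^ 2 * exp (v * X ω)) μ :=
    (((hpow 2).sub ((hpow 1).const_mul (2 * c))).add ((hpow 0).const_mul (c ^ 2))).congr
      (ae_of_all _ fun ω => by simp only [Pi.add_apply, Pi.sub_apply]; ring)
  have hsupp :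
      Function.support (fun ω => (X ω - c) ^ 2 * exp (v * X ω)) = {ω | X ω ≠ c} := by
    ext ω
    simp [sub_eq_zero]
  rw [integral_pos_iff_support_of_nonneg (fun ω => by positivity) hint, hsupp]
  exact pos_iff_ne_zero.2 fun h => hX (ae_iff.2 h)

lemma strictMonoOn_deriv_cgf (hX : ∀ c, ¬ ∀ᵐ ω ∂μ, X ω = c) :
    StrictMonoOn (deriv (cgf X μ)) (interior (integrableExpSet X μ)) := by
  have hμ : μ ≠ 0 := fun h => hX 0 (by simp [h])
  refine strictMonoOn_of_deriv_pos convex_integrableExpSet.interior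
    analyticOnNhd_cgf.deriv.continuousOn fun v hv => ?_
  rw [interior_interior] at hv
  rw [show deriv (deriv (cgf X μ)) = iteratedDeriv 2 (cgf X μ) by
    rw [iteratedDeriv_succ, iteratedDeriv_one], iteratedDeriv_two_cgf_eq_integral hv]
  exact div_pos (integral_sq_sub_mul_exp_pos hv (hX _))
    (mgf_pos' hμ (interior_subset (s := integrableExpSet X μ) hv))

end ProbabilityTheory

namespace IsOrlicz

variable {M : ℝ → ℝ} {α : ℝ}

lemma continuous (hM : IsOrlicz M) : Continuous M :=
  continuousOn_univ.mp (hM.1.continuousOn isOpen_univ)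

lemma nonneg (hM : IsOrlicz M) (t : ℝ) : 0 ≤ M t := by
  rcases eq_or_ne t 0 with rfl | ht
  · exact hM.2.2.1.ge
  · exact (hM.2.2.2 t ht).le

lemma map_abs (hM : IsOrlicz M) (t : ℝ) : M |t| = M t := by
  rcases abs_choice t with h | h <;> simp [h, hM.2.1]

lemma le_of_abs_le (hM : IsOrlicz M) {s t : ℝ} (h : |s| ≤ t) : M s ≤ M t := by
  have hs : s ∈ segment ℝ (-t) t := by
    rw [segment_eq_Icc (by linarith [abs_nonneg s])]
    exact abs_le.mp h
  simpa [hM.2.1] using hM.1.le_on_segment (mem_univ _) (mem_univ _) hs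

lemma mul_abs_sub_one_le (hM : IsOrlicz M) (t : ℝ) : M 1 * (|t| - 1) ≤ M t := by
  rcases le_or_gt |t| 1 with ht | ht
  · nlinarith [hM.nonneg 1, hM.nonneg t]
  · have hslope := hM.1.secant_mono (a := 0) (x := 1) (y := |t|) (mem_univ _) (mem_univ _)
      (mem_univ _) one_ne_zero (by positivity) ht.le
    rw [hM.2.2.1, sub_zero, sub_zero, sub_zero, div_one, le_div_iff₀ (by linarith)] at hslope
    rw [← hM.map_abs t]
    nlinarith [hM.nonneg 1]

lemma integrable_exp_mul (hM : IsOrlicz M) (hα : α < 0) :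
    Integrable fun x => exp (α * M x) := by
  have hM1 := hM.2.2.2 1 one_ne_zero
  refine ((integrable_exp_neg_mul_abs (mul_pos (neg_pos.2 hα) hM1)).const_mul
    (exp (-α * M 1))).mono' (by have := hM.continuous; fun_prop : Continuous fun x =>
      exp (α * M x)).aestronglyMeasurable ?_
  refine ae_of_all _ fun x => ?_
  rw [norm_of_nonneg (exp_pos _).le, ← exp_add]
  exact exp_le_exp.2 (by nlinarith [hM.mul_abs_sub_one_le x])

lemma Iio_subset_interior_integrableExpSet (hM : IsOrlicz M) :
    Iio 0 ⊆ interior (integrableExpSet M volume) :=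
  isOpen_Iio.subset_interior_iff.2 fun _ hα => hM.integrable_exp_mul hα

lemma integrable_mul_exp_mul (hM : IsOrlicz M) (hα : α < 0) :
    Integrable fun x => M x * exp (α * M x) := by
  simpa using integrable_pow_mul_exp_of_mem_interior_integrableExpSet
    (hM.Iio_subset_interior_integrableExpSet hα) 1

lemma mgf_pos (hM : IsOrlicz M) (hα : α < 0) : 0 < mgf M volume α :=
  mgf_pos' (NeZero.ne _) (hM.integrable_exp_mul hα)

lemma deriv_cgf (hM : IsOrlicz M) (hα : α < 0) :
    deriv (cgf M volume) α = (∫ x, M x * exp (α * M x)) / mgf M volume α :=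
  ProbabilityTheory.deriv_cgf (hM.Iio_subset_interior_integrableExpSet hα)

lemma not_ae_eq_const (hM : IsOrlicz M) (c : ℝ) :
    ¬ ∀ᵐ x ∂(volume : Measure ℝ), M x = c := by
  rw [ae_iff]
  refine (IsOpen.measure_pos volume (isOpen_ne_fun hM.continuous continuous_const) ?_).ne'
  by_cases h : M 0 = c
  · exact ⟨1, fun h1 => (hM.2.2.2 1 one_ne_zero).ne' (h1.trans (h.symm.trans hM.2.2.1))⟩
  · exact ⟨0, h⟩

lemma two_mul_mul_exp_le_mgf (hM : IsOrlicz M) (hα : α < 0) {T : ℝ} (hT : 0 ≤ T) :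
    2 * T * exp (α * M T) ≤ mgf M volume α := by
  have hint := hM.integrable_exp_mul hα
  calc 2 * T * exp (α * M T) = ∫ _ in Icc (-T) T, exp (α * M T) := by
        rw [setIntegral_const, Real.volume_real_Icc, smul_eq_mul, max_eq_left (by linarith)]
        ring
    _ ≤ ∫ x in Icc (-T) T, exp (α * M x) :=
        setIntegral_mono_on (integrableOn_const measure_Icc_lt_top.ne) hint.integrableOn
          measurableSet_Icc fun x hx =>
            exp_le_exp.2 (mul_le_mul_of_nonpos_left (hM.le_of_abs_le (abs_le.2 hx)) hα.le)
    _ ≤ mgf M volume α :=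
        setIntegral_le_integral hint (ae_of_all _ fun x => (exp_pos _).le)

lemma tendsto_mgf_nhdsLT_zero (hM : IsOrlicz M) : Tendsto (mgf M volume) (𝓝[<] 0) atTop := by
  refine tendsto_atTop.2 fun b => ?_
  set T := max b 0 + 1
  have hT : 0 < T := by positivity
  have hlim : Tendsto (fun α => 2 * T * exp (α * M T)) (𝓝[<] 0) (𝓝 (2 * T)) :=
    ((by fun_prop : Continuous fun α => 2 * T * exp (α * M T)).tendsto' 0 _
      (by simp)).mono_left nhdsWithin_le_nhds
  filter_upwards [self_mem_nhdsWithin, hlim.eventually (lt_mem_nhds (by linarith))]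
    with α hα hTα
  linarith [hM.two_mul_mul_exp_le_mgf hα hT.le, le_max_left b 0]

/-- Outside `[-r, r]` with `r = B / M 1 + 1` the linear growth of `M` gives `M ≥ B`. -/
lemma mul_mgf_le (hM : IsOrlicz M) (hα : α < 0) {B : ℝ} (hB : 0 ≤ B) :
    B * mgf M volume α ≤ (∫ x, M x * exp (α * M x)) + 2 * B * (B / M 1 + 1) := by
  have hM1 := hM.2.2.2 1 one_ne_zero
  set r := B / M 1 + 1
  have hr : 0 ≤ r := by positivity
  have hind : Integrable ((Icc (-r) r).indicator fun _ => B) :=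
    (integrableOn_const measure_Icc_lt_top.ne).integrable_indicator measurableSet_Icc
  have hpoint : ∀ x,
      B * exp (α * M x) ≤ M x * exp (α * M x) + (Icc (-r) r).indicator (fun _ => B) x := by
    intro x
    have hMe := mul_nonneg (hM.nonneg x) (exp_pos (α * M x)).le
    by_cases hx : x ∈ Icc (-r) r
    · have : exp (α * M x) ≤ 1 :=
        exp_le_one_iff.2 (mul_nonpos_of_nonpos_of_nonneg hα.le (hM.nonneg x))
      rw [indicator_of_mem hx]
      nlinarith
    · have hxr : r < |x| := lt_of_not_ge fun h => hx (abs_le.1 h)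
      have hBM : B ≤ M x := by
        have := hM.mul_abs_sub_one_le x
        have : M 1 * (r - 1) = B := by simp only [r]; field_simp; ring
        nlinarith
      rw [indicator_of_notMem hx, add_zero]
      exact mul_le_mul_of_nonneg_right hBM (exp_pos _).le
  calc B * mgf M volume α = ∫ x, B * exp (α * M x) := (integral_const_mul B _).symm
    _ ≤ ∫ x, (M x * exp (α * M x) + (Icc (-r) r).indicator (fun _ => B) x) :=
        integral_mono ((hM.integrable_exp_mul hα).const_mul B)
          ((hM.integrable_mul_exp_mul hα).add hind) hpoint
    _ = (∫ x, M x * exp (α * M x)) + 2 * B * r := by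
        rw [integral_add (hM.integrable_mul_exp_mul hα) hind, integral_indicator_const _
          measurableSet_Icc, Real.volume_real_Icc, max_eq_left (by linarith), smul_eq_mul]
        ring

lemma tendsto_deriv_cgf_nhdsLT_zero (hM : IsOrlicz M) :
    Tendsto (deriv (cgf M volume)) (𝓝[<] 0) atTop := by
  refine tendsto_atTop.2 fun b => ?_
  set B := max b 0 + 1
  have hB : 0 ≤ B := by positivity
  have hsmall : Tendsto (fun α => 2 * B * (B / M 1 + 1) / mgf M volume α) (𝓝[<] 0) (𝓝 0) :=
    tendsto_const_nhds.div_atTop hM.tendsto_mgf_nhdsLT_zero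
  filter_upwards [self_mem_nhdsWithin, hsmall.eventually (gt_mem_nhds one_pos)] with α hα hC
  have hZ := hM.mgf_pos hα
  rw [hM.deriv_cgf hα, le_div_iff₀ hZ]
  rw [div_lt_one hZ] at hC
  nlinarith [hM.mul_mgf_le hα hB, mul_le_mul_of_nonneg_right (le_max_left b 0) hZ.le]

lemma integral_mul_exp_mul_le (hM : IsOrlicz M) (hα : α ≤ -1) {ε : ℝ} (hε : 0 ≤ ε) :
    (∫ x, M x * exp (α * M x))
      ≤ ε * mgf M volume α + exp ((α + 1) * ε) * ∫ x, M x * exp (-M x) := by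
  have hα0 : α < 0 := by linarith
  have hint₁ : Integrable fun x => M x * exp (-M x) := by
    simpa using hM.integrable_mul_exp_mul (α := -1) (by norm_num)
  have hpoint : ∀ x, M x * exp (α * M x)
      ≤ ε * exp (α * M x) + exp ((α + 1) * ε) * (M x * exp (-M x)) := by
    intro x
    have hMe := mul_nonneg (hM.nonneg x) (exp_pos (-M x)).le
    have h₁ := mul_nonneg (exp_pos ((α + 1) * ε)).le hMe
    by_cases hx : M x ≤ ε
    · nlinarith [mul_le_mul_of_nonneg_right hx (exp_pos (α * M x)).le]
    · have hsplit : M x * exp (α * M x) = exp ((α + 1) * M x) * (M x * exp (-M x)) := by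
        rw [show α * M x = (α + 1) * M x + -M x by ring, exp_add]
        ring
      have : exp ((α + 1) * M x) ≤ exp ((α + 1) * ε) :=
        exp_le_exp.2 (mul_le_mul_of_nonpos_left (le_of_not_ge hx) (by linarith))
      nlinarith [mul_le_mul_of_nonneg_right this hMe, mul_nonneg hε (exp_pos (α * M x)).le]
  calc (∫ x, M x * exp (α * M x))
      ≤ ∫ x, (ε * exp (α * M x) + exp ((α + 1) * ε) * (M x * exp (-M x))) :=
        integral_mono (hM.integrable_mul_exp_mul hα0)
          (((hM.integrable_exp_mul hα0).const_mul ε).add (hint₁.const_mul _)) hpoint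
    _ = ε * mgf M volume α + exp ((α + 1) * ε) * ∫ x, M x * exp (-M x) := by
        rw [integral_add ((hM.integrable_exp_mul hα0).const_mul ε) (hint₁.const_mul _),
          integral_const_mul, integral_const_mul, mgf]

lemma deriv_cgf_le (hM : IsOrlicz M) (hα : α ≤ -1) {ε δ : ℝ} (hε : 0 ≤ ε)
    (hδ : 0 < δ) :
    deriv (cgf M volume) α
      ≤ ε + exp ε * (∫ x, M x * exp (-M x)) / (2 * δ) * exp (α * (ε - M δ)) := by
  have hα0 : α < 0 := by linarith
  have hZ := hM.mgf_pos hα0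
  set C := ∫ x, M x * exp (-M x)
  have hC : 0 ≤ C := integral_nonneg fun x => mul_nonneg (hM.nonneg x) (exp_pos _).le
  have hweight : exp ((α + 1) * ε) * C
      = exp ε * C / (2 * δ) * exp (α * (ε - M δ)) * (2 * δ * exp (α * M δ)) := by
    rw [show (α + 1) * ε = ε + α * (ε - M δ) + α * M δ by ring, exp_add, exp_add]
    field_simp
  have hcoef : 0 ≤ exp ε * C / (2 * δ) * exp (α * (ε - M δ)) := by positivity
  rw [hM.deriv_cgf hα0, div_le_iff₀ hZ]
  nlinarith [hM.integral_mul_exp_mul_le hα hε,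
    mul_le_mul_of_nonneg_left (hM.two_mul_mul_exp_le_mgf hα0 hδ.le) hcoef]

lemma tendsto_deriv_cgf_atBot (hM : IsOrlicz M) :
    Tendsto (deriv (cgf M volume)) atBot (𝓝 0) := by
  refine tendsto_order.2 ⟨fun a ha => ?_, fun a ha => ?_⟩
  · filter_upwards [eventually_lt_atBot 0] with α hα
    rw [hM.deriv_cgf hα]
    exact ha.trans_le (div_nonneg
      (integral_nonneg fun x => mul_nonneg (hM.nonneg x) (exp_pos _).le) (hM.mgf_pos hα).le)
  · have hnear : ∀ᶠ δ in 𝓝[>] 0, M δ < a / 2 := nhdsWithin_le_nhds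
      ((hM.continuous.tendsto' 0 0 hM.2.2.1).eventually (gt_mem_nhds (half_pos ha)))
    obtain ⟨δ, hMδ, hδ⟩ := (hnear.and self_mem_nhdsWithin).exists
    set K := exp (a / 2) * (∫ x, M x * exp (-M x)) / (2 * δ)
    have hdecay : Tendsto (fun α => K * exp (α * (a / 2 - M δ))) atBot (𝓝 0) := by
      simpa using (tendsto_exp_atBot.comp
        (tendsto_id.atBot_mul_const (sub_pos.2 hMδ))).const_mul K
    filter_upwards [eventually_le_atBot (-1), hdecay.eventually (gt_mem_nhds (half_pos ha))]
      with α hα hsmall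
    linarith [hM.deriv_cgf_le hα (half_pos ha).le hδ]

end IsOrlicz

theorem stmt5 (M : ℝ → ℝ) (hM : IsOrlicz M)
    (φ : ℝ → ℝ) (hφ : ∀ α, φ α = Real.log (∫ x : ℝ, Real.exp (α * M x))) :
    Tendsto (deriv φ) (nhdsWithin 0 (Set.Iio (0 : ℝ))) atTop ∧
    Tendsto (deriv φ) atBot (nhds 0) ∧
    ∀ R : ℝ, 0 < R → ∃! α : ℝ, α < 0 ∧ deriv φ α = R := by
  obtain rfl : φ = cgf M volume := funext hφ
  have hIio := hM.Iio_subset_interior_integrableExpSet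
  refine ⟨hM.tendsto_deriv_cgf_nhdsLT_zero, hM.tendsto_deriv_cgf_atBot, fun R hR => ?_⟩
  exact ((strictMonoOn_deriv_cgf hM.not_ae_eq_const).mono hIio).existsUnique_eq_of_tendsto
    (analyticOnNhd_cgf.deriv.continuousOn.mono hIio) hM.tendsto_deriv_cgf_atBot
    hM.tendsto_deriv_cgf_nhdsLT_zero hR
end

section
/- Let d ∈ ℕ, R ∈ (0,∞), M an Orlicz function, α* < 0 with φ'(α*) = R, and Y_i = M(Z_i) - R where Z_1,…,Z_d are i.i.d. with Gibbs density p(x) = exp(α*·M(x) - φ(α*)). Then vol_d(B_M^d(dR)) ≤ exp(d(φ(α*) - α*R)) · P[∑_{i=1}^d Y_i ≤ 0] ≤ exp(d(φ(α*) - α*R)). -/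
/-!
Under `μ` the vector `(Z_i)` has the product Gibbs law, whose Lebesgue density
`∏ exp(α* M(x_i) - φ(α*)) = exp(α* ∑ M(x_i) - d φ(α*))` is at least `exp(α* d R - d φ(α*))` on the
Orlicz ball `∑ M(x_i) ≤ d R`, because `α* ≤ 0`. Integrating this bound over the ball gives
`vol(B) ≤ exp(d(φ(α*) - α* R)) P[(Z_i) ∈ B]`, and `(Z_i) ∈ B` is exactly the event `∑ Y_i ≤ 0`.
-/

open MeasureTheory ProbabilityTheory
open scoped ENNReal

namespace MeasureTheory

theorem lintegral_fin_nat_prod_eq_prod {n : ℕ} {E : Fin n → Type*}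
    {mE : ∀ i, MeasurableSpace (E i)} {μ : (i : Fin n) → Measure (E i)} [∀ i, SigmaFinite (μ i)]
    {f : (i : Fin n) → E i → ℝ≥0∞} (hf : ∀ i, Measurable (f i)) :
    ∫⁻ x, ∏ i, f i (x i) ∂(Measure.pi μ) = ∏ i, ∫⁻ x, f i x ∂(μ i) := by
  induction n with
  | zero => simp
  | succ n ih =>
      calc
        _ = ∫⁻ x : E 0 × ((i : Fin n) → E (Fin.succ i)),
            f 0 x.1 * ∏ i : Fin n, f (Fin.succ i) (x.2 i)
            ∂((μ 0).prod (Measure.pi (fun i ↦ μ i.succ))) := by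
          rw [← ((measurePreserving_piFinSuccAbove μ 0).symm).lintegral_comp_emb
            (MeasurableEquiv.measurableEmbedding _)]
          simp_rw [MeasurableEquiv.piFinSuccAbove_symm_apply, Fin.insertNthEquiv,
            Fin.prod_univ_succ, Fin.insertNth_zero, Equiv.coe_fn_mk, Fin.cons_succ,
            Fin.zero_succAbove, Fin.cons_zero]
          rfl
        _ = (∫⁻ x, f 0 x ∂μ 0) * ∏ i : Fin n, ∫⁻ x, f i.succ x ∂(μ i.succ) := by
          rw [← ih fun i ↦ hf i.succ]
          exact lintegral_prod_mul (hf 0).aemeasurable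
            (Finset.measurable_prod _ fun i _ ↦ (hf _).comp (measurable_pi_apply i)).aemeasurable
        _ = ∏ i, ∫⁻ x, f i x ∂(μ i) := by rw [Fin.prod_univ_succ]

theorem lintegral_fintype_prod_eq_prod {ι : Type*} [Fintype ι] {E : ι → Type*}
    {mE : ∀ i, MeasurableSpace (E i)} {μ : (i : ι) → Measure (E i)} [∀ i, SigmaFinite (μ i)]
    {f : (i : ι) → E i → ℝ≥0∞} (hf : ∀ i, Measurable (f i)) :
    ∫⁻ x, ∏ i, f i (x i) ∂(Measure.pi μ) = ∏ i, ∫⁻ x, f i x ∂(μ i) := by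
  let e := (Fintype.equivFin ι).symm
  rw [← (measurePreserving_piCongrLeft _ e).lintegral_comp_emb
    (MeasurableEquiv.measurableEmbedding _)]
  simp_rw [← e.prod_comp, MeasurableEquiv.coe_piCongrLeft, Equiv.piCongrLeft_apply_apply]
  exact lintegral_fin_nat_prod_eq_prod fun i ↦ hf _

theorem Measure.pi_withDensity {ι : Type*} [Fintype ι] {E : ι → Type*}
    {mE : ∀ i, MeasurableSpace (E i)} {μ : (i : ι) → Measure (E i)} [∀ i, SigmaFinite (μ i)]
    {f : (i : ι) → E i → ℝ≥0∞} (hf : ∀ i, Measurable (f i))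
    [∀ i, SigmaFinite ((μ i).withDensity (f i))] :
    Measure.pi (fun i ↦ (μ i).withDensity (f i))
      = (Measure.pi μ).withDensity fun x ↦ ∏ i, f i (x i) := by
  classical
  refine Measure.pi_eq fun s hs ↦ ?_
  have hind : (Set.univ.pi s).indicator (fun x ↦ ∏ i, f i (x i))
      = fun x ↦ ∏ i, (s i).indicator (f i) (x i) := by
    ext x
    by_cases hx : x ∈ Set.univ.pi s
    · rw [Set.indicator_of_mem hx]
      exact Finset.prod_congr rfl fun i _ ↦ (Set.indicator_of_mem (hx i trivial) _).symm
    · obtain ⟨i, hi⟩ : ∃ i, x i ∉ s i := by simpa [Set.mem_univ_pi] using hx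
      rw [Set.indicator_of_notMem hx, Finset.prod_eq_zero (Finset.mem_univ i)
        (Set.indicator_of_notMem hi _)]
  rw [withDensity_apply _ (.univ_pi hs), ← lintegral_indicator (.univ_pi hs), hind,
    lintegral_fintype_prod_eq_prod fun i ↦ (hf i).indicator (hs i)]
  simp_rw [withDensity_apply _ (hs _), lintegral_indicator (hs _)]

theorem Measure.withDensity_ne_zero {α : Type*} [MeasurableSpace α] {μ : Measure α} [NeZero μ]
    {f : α → ℝ≥0∞} (hf : AEMeasurable f μ) (hpos : ∀ x, f x ≠ 0) : μ.withDensity f ≠ 0 := by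
  rw [Ne, withDensity_eq_zero_iff hf]
  intro h
  obtain ⟨x, hx⟩ := h.exists
  exact hpos x hx

end MeasureTheory

theorem ProbabilityTheory.iIndepFun.measure_preimage_eq_pi_of_map_eq {Ω ι β : Type*} [Fintype ι]
    [MeasurableSpace Ω] [MeasurableSpace β] {μ : Measure Ω} {X : ι → Ω → β} {ν : Measure β}
    (hν : ν ≠ 0) (hX : iIndepFun X μ) (hlaw : ∀ i, μ.map (X i) = ν)
    {s : Set (ι → β)} (hs : MeasurableSet s) :
    μ ((fun ω i ↦ X i ω) ⁻¹' s) = Measure.pi (fun _ ↦ ν) s := by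
  have hXmeas (i : ι) : AEMeasurable (X i) μ := .of_map_ne_zero (hlaw i ▸ hν)
  rw [← Measure.map_apply_of_aemeasurable (aemeasurable_pi_lambda _ hXmeas) hs,
    hX.map_fun_eq_pi_map hXmeas]
  simp_rw [hlaw]

theorem volume_sublevel_le_exp_mul_pi_withDensity {ι : Type*} [Fintype ι] {M : ℝ → ℝ}
    (hM : Measurable M) {α : ℝ} (hα : α ≤ 0) (c r : ℝ) :
    volume {x : ι → ℝ | ∑ i, M (x i) ≤ r}
      ≤ ENNReal.ofReal (Real.exp (Fintype.card ι * c - α * r)) *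
        Measure.pi (fun _ : ι ↦ volume.withDensity fun t ↦ ENNReal.ofReal (Real.exp (α * M t - c)))
          {x | ∑ i, M (x i) ≤ r} := by
  have hB : MeasurableSet {x : ι → ℝ | ∑ i, M (x i) ≤ r} :=
    measurableSet_le (by fun_prop) measurable_const
  have hdensity : Measurable fun t ↦ ENNReal.ofReal (Real.exp (α * M t - c)) := by fun_prop
  rw [Measure.pi_withDensity (ι := ι) fun _ ↦ hdensity, withDensity_apply _ hB,
    ← lintegral_const_mul' _ _ ENNReal.ofReal_ne_top, ← volume_pi, ← setLIntegral_one]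
  refine setLIntegral_mono' hB fun x hx ↦ ?_
  rw [← ENNReal.ofReal_prod_of_nonneg fun i _ ↦ (Real.exp_pos _).le, ← ENNReal.ofReal_mul
    (Real.exp_pos _).le, ← Real.exp_sum, ← Real.exp_add]
  refine ENNReal.one_le_ofReal.2 (Real.one_le_exp ?_)
  have hexponent : Fintype.card ι * c - α * r + ∑ i, (α * M (x i) - c)
      = α * (∑ i, M (x i) - r) := by
    rw [Finset.sum_sub_distrib, ← Finset.mul_sum, Finset.sum_const, Finset.card_univ,
      nsmul_eq_mul]
    ring
  rw [hexponent]
  exact mul_nonneg_of_nonpos_of_nonpos hα (sub_nonpos.2 hx)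

theorem stmt11_general {Ω : Type*} [MeasurableSpace Ω] (μ : Measure Ω) [IsProbabilityMeasure μ]
    (d : ℕ) (R : ℝ)
    (M : ℝ → ℝ) (hM : IsOrlicz M)
    (φ : ℝ → ℝ)
    (αs : ℝ) (hαs : αs < 0)
    (Z : Fin d → Ω → ℝ)
    (hindep : ProbabilityTheory.iIndepFun Z μ)
    (hdist : ∀ i, Measure.map (Z i) μ =
      volume.withDensity fun x => ENNReal.ofReal (Real.exp (αs * M x - φ αs))) :
    (volume {x : Fin d → ℝ | ∑ i, M (x i) ≤ d * R}).toReal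
        ≤ Real.exp (d * (φ αs - αs * R)) *
            (μ {ω | ∑ i, (M (Z i ω) - R) ≤ 0}).toReal ∧
    Real.exp (d * (φ αs - αs * R)) * (μ {ω | ∑ i, (M (Z i ω) - R) ≤ 0}).toReal
        ≤ Real.exp (d * (φ αs - αs * R)) := by
  have hMmeas : Measurable M := hM.1.locallyLipschitz.continuous.measurable
  set ν : Measure ℝ := volume.withDensity fun x ↦ ENNReal.ofReal (Real.exp (αs * M x - φ αs))
  set B : Set (Fin d → ℝ) := {x | ∑ i, M (x i) ≤ d * R}
  set E : Set Ω := {ω | ∑ i, (M (Z i ω) - R) ≤ 0}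
  have hν : ν ≠ 0 := Measure.withDensity_ne_zero (by fun_prop) fun x ↦ by positivity
  have hevent : E = (fun ω i ↦ Z i ω) ⁻¹' B := by
    ext ω
    simp [E, B, Finset.sum_sub_distrib]
  have hprob : μ E = Measure.pi (fun _ ↦ ν) B := by
    rw [hevent, hindep.measure_preimage_eq_pi_of_map_eq hν hdist
      (measurableSet_le (by fun_prop) measurable_const)]
  have hvolume : volume B ≤ ENNReal.ofReal (Real.exp (d * φ αs - αs * (d * R))) * μ E := by
    have := volume_sublevel_le_exp_mul_pi_withDensity (ι := Fin d) hMmeas hαs.le (φ αs) (d * R)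
    rwa [Fintype.card_fin, ← hprob] at this
  refine ⟨?_, mul_le_of_le_one_right (Real.exp_nonneg _) measureReal_le_one⟩
  calc (volume B).toReal
      ≤ (ENNReal.ofReal (Real.exp (d * φ αs - αs * (d * R))) * μ E).toReal :=
        ENNReal.toReal_mono (by finiteness) hvolume
    _ = _ := by
        rw [ENNReal.toReal_mul, ENNReal.toReal_ofReal (Real.exp_nonneg _)]
        congr 2
        ring

theorem stmt11 {Ω : Type*} [MeasurableSpace Ω] (μ : Measure Ω) [IsProbabilityMeasure μ]
    (d : ℕ) (hd : 0 < d) (R : ℝ) (hR : 0 < R)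
    (M : ℝ → ℝ) (hM : IsOrlicz M)
    (φ : ℝ → ℝ) (hφ : ∀ α, φ α = Real.log (∫ x : ℝ, Real.exp (α * M x)))
    (αs : ℝ) (hαs : αs < 0) (hder : deriv φ αs = R)
    (Z : Fin d → Ω → ℝ)
    (hindep : ProbabilityTheory.iIndepFun Z μ)
    (hdist : ∀ i, Measure.map (Z i) μ =
      volume.withDensity fun x => ENNReal.ofReal (Real.exp (αs * M x - φ αs))) :
    (volume {x : Fin d → ℝ | ∑ i, M (x i) ≤ d * R}).toReal
        ≤ Real.exp (d * (φ αs - αs * R)) *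
            (μ {ω | ∑ i, (M (Z i ω) - R) ≤ 0}).toReal ∧
    Real.exp (d * (φ αs - αs * R)) * (μ {ω | ∑ i, (M (Z i ω) - R) ≤ 0}).toReal
        ≤ Real.exp (d * (φ αs - αs * R)) :=
  stmt11_general μ d R M hM φ αs hαs Z hindep hdist
end
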